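/- arXiv:2310.15009 — 5 statements merged into one kernel-verified Lean document; each statement's English description precedes it below -/
import Mathlib

section
/- Let X and Y be nonnegative random variables defined on a common probability space, let δ > 0, and set M := max(E[X^{1+δ}], E[Y^{1+δ}]) < ∞ and β := P(X ≠ Y)/2. Then |E[X] − E[Y]| ≤ 4 · M^{1/(1+δ)} · β^{δ/(1+δ)}. -/
open MeasureTheory

/-- Yoshihara-type truncation inequality: two nonnegative random variables that agree
except on an event of small probability and have bounded `(1+δ)`-moments have close
expectations. -/
theorem stmt0 {Ω : Type*} [MeasurableSpace Ω] (P : Measure Ω) [IsProbabilityMeasure P]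
    (X Y : Ω → ℝ) (hXm : Measurable X) (hYm : Measurable Y)
    (hX0 : ∀ ω, 0 ≤ X ω) (hY0 : ∀ ω, 0 ≤ Y ω)
    (δ : ℝ) (hδ : 0 < δ)
    (hXint : Integrable (fun ω => X ω ^ (1 + δ)) P)
    (hYint : Integrable (fun ω => Y ω ^ (1 + δ)) P)
    (M β : ℝ)
    (hM : M = max (∫ ω, X ω ^ (1 + δ) ∂P) (∫ ω, Y ω ^ (1 + δ) ∂P))
    (hβ : β = (P {ω | X ω ≠ Y ω}).toReal / 2) :
    |(∫ ω, X ω ∂P) - ∫ ω, Y ω ∂P| ≤ 4 * M ^ (1 / (1 + δ)) * β ^ (δ / (1 + δ)) := by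
  have hp0 : (0:ℝ) < 1 + δ := by linarith
  set p : ℝ := 1 + δ with hpdef
  set q : ℝ := (1 + δ) / δ with hqdef
  have hq0 : (0:ℝ) < q := by positivity
  have hpq : p.HolderConjugate q := by
    refine ⟨?_, hp0, hq0⟩
    · rw [hpdef, hqdef]
      field_simp
  have hqinv : 1 / q = δ / (1 + δ) := by
    rw [hqdef, one_div_div]
  set A : Set Ω := {ω | X ω ≠ Y ω} with hAdef
  have hA : MeasurableSet A := (measurableSet_eq_fun hXm hYm).compl
  have hPA : (P A).toReal = 2 * β := by rw [hβ]; ring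
  have hPA0 : 0 ≤ (P A).toReal := ENNReal.toReal_nonneg
  have hβ0 : 0 ≤ β := by rw [hβ]; positivity
  have hpne : ENNReal.ofReal p ≠ 0 := by
    simp [ENNReal.ofReal_eq_zero, not_le, hp0]
  have hptop : ENNReal.ofReal p ≠ ⊤ := ENNReal.ofReal_ne_top
  -- Memℒp facts
  have hmem : ∀ (Z : Ω → ℝ), Measurable Z → (∀ ω, 0 ≤ Z ω) →
      Integrable (fun ω => Z ω ^ p) P → MemLp Z (ENNReal.ofReal p) P := by
    intro Z hZm hZ0 hZint
    refine (memLp_norm_rpow_iff hZm.aestronglyMeasurable hpne hptop).mp ?_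
    rw [ENNReal.div_self hpne hptop, memLp_one_iff_integrable]
    have : (fun x => ‖Z x‖ ^ (ENNReal.ofReal p).toReal) = fun x => Z x ^ p := by
      funext x
      rw [ENNReal.toReal_ofReal hp0.le, Real.norm_of_nonneg (hZ0 x)]
    rw [this]; exact hZint
  have hXmem : MemLp X (ENNReal.ofReal p) P := hmem X hXm hX0 hXint
  have hYmem : MemLp Y (ENNReal.ofReal p) P := hmem Y hYm hY0 hYint
  have hone_le : (1 : ENNReal) ≤ ENNReal.ofReal p := by
    rw [ENNReal.one_le_ofReal]; linarith
  have hXi : Integrable X P := hXmem.integrable hone_le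
  have hYi : Integrable Y P := hYmem.integrable hone_le
  -- the indicator function
  set g : Ω → ℝ := A.indicator (fun _ => (1:ℝ)) with hgdef
  have hg0 : ∀ ω, 0 ≤ g ω := fun ω => Set.indicator_nonneg (fun _ _ => zero_le_one) ω
  have hgmem : MemLp g (ENNReal.ofReal q) P :=
    memLp_indicator_const _ hA 1 (Or.inr (measure_ne_top P A))
  have hgq : (∫ ω, g ω ^ q ∂P) = (P A).toReal := by
    have h1 : (fun ω => g ω ^ q) = g := by
      funext ω
      rw [hgdef]
      by_cases hω : ω ∈ A
      · simp [Set.indicator_of_mem hω]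
      · simp [Set.indicator_of_notMem hω, Real.zero_rpow hq0.ne']
    rw [h1, hgdef, integral_indicator_const (1:ℝ) hA]
    simp
    rfl
  -- Hölder bound for each
  have hB : ∀ (Z : Ω → ℝ), (∀ ω, 0 ≤ Z ω) → MemLp Z (ENNReal.ofReal p) P →
      (∫ ω, Z ω ^ p ∂P) ≤ M →
      (∫ ω, Z ω * g ω ∂P) ≤ M ^ (1/p) * (P A).toReal ^ (1/q) := by
    intro Z hZ0 hZmem hZM
    have h := integral_mul_le_Lp_mul_Lq_of_nonneg hpq (ae_of_all _ hZ0) (ae_of_all _ hg0)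
      hZmem hgmem
    rw [hgq] at h
    refine h.trans (mul_le_mul_of_nonneg_right ?_ (Real.rpow_nonneg hPA0 _))
    exact Real.rpow_le_rpow (integral_nonneg fun ω => Real.rpow_nonneg (hZ0 ω) p) hZM
      (by positivity)
  have hM0 : 0 ≤ M := by
    rw [hM]
    exact le_max_of_le_left (integral_nonneg fun ω => Real.rpow_nonneg (hX0 ω) _)
  have hBX : (∫ ω, X ω * g ω ∂P) ≤ M ^ (1/p) * (P A).toReal ^ (1/q) :=
    hB X hX0 hXmem (hM ▸ le_max_left _ _)
  have hBY : (∫ ω, Y ω * g ω ∂P) ≤ M ^ (1/p) * (P A).toReal ^ (1/q) :=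
    hB Y hY0 hYmem (hM ▸ le_max_right _ _)
  -- integrability of products
  have hmul : ∀ (Z : Ω → ℝ), (fun ω => Z ω * g ω) = A.indicator Z := by
    intro Z; funext ω
    rw [hgdef]
    by_cases hω : ω ∈ A
    · simp [Set.indicator_of_mem hω]
    · simp [Set.indicator_of_notMem hω]
  have hXgi : Integrable (fun ω => X ω * g ω) P := by
    rw [hmul]; exact hXi.indicator hA
  have hYgi : Integrable (fun ω => Y ω * g ω) P := by
    rw [hmul]; exact hYi.indicator hA
  -- the difference is supported on A
  have hdiff : (∫ ω, X ω ∂P) - ∫ ω, Y ω ∂P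
      = (∫ ω, X ω * g ω ∂P) - ∫ ω, Y ω * g ω ∂P := by
    rw [← integral_sub hXi hYi, ← integral_sub hXgi hYgi]
    refine integral_congr_ae (ae_of_all _ fun ω => ?_)
    by_cases hω : ω ∈ A
    · simp [hgdef, Set.indicator_of_mem hω]
    · have : X ω = Y ω := not_not.mp hω
      simp [hgdef, Set.indicator_of_notMem hω, this]
  have hX_nonneg : 0 ≤ ∫ ω, X ω * g ω ∂P :=
    integral_nonneg fun ω => mul_nonneg (hX0 ω) (hg0 ω)
  have hY_nonneg : 0 ≤ ∫ ω, Y ω * g ω ∂P :=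
    integral_nonneg fun ω => mul_nonneg (hY0 ω) (hg0 ω)
  have habs : |(∫ ω, X ω ∂P) - ∫ ω, Y ω ∂P| ≤ M ^ (1/p) * (P A).toReal ^ (1/q) := by
    rw [hdiff, abs_sub_le_iff]
    constructor <;> linarith
  refine habs.trans ?_
  rw [hPA, Real.mul_rpow (by norm_num) hβ0]
  have h2 : (2:ℝ) ^ (1/q) ≤ 2 := by
    nth_rewrite 2 [show (2:ℝ) = 2 ^ (1:ℝ) by norm_num]
    apply Real.rpow_le_rpow_of_exponent_le (by norm_num)
    rw [hqinv]
    rw [div_le_one hp0]; linarith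
  have hβr : 0 ≤ β ^ (1/q) := Real.rpow_nonneg hβ0 _
  have hMr : 0 ≤ M ^ (1/p) := Real.rpow_nonneg hM0 _
  calc M ^ (1/p) * (2 ^ (1/q) * β ^ (1/q))
      ≤ M ^ (1/p) * (2 * β ^ (1/q)) := by
        apply mul_le_mul_of_nonneg_left (mul_le_mul_of_nonneg_right h2 hβr) hMr
    _ ≤ 4 * M ^ (1 / (1 + δ)) * β ^ (δ / (1 + δ)) := by
        rw [← hqinv, ← hpdef]
        have : 0 ≤ M ^ (1/p) * β ^ (1/q) := mul_nonneg hMr hβr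
        nlinarith
end

section
/- Let (S, 𝒮) and (T, 𝒯) be measurable spaces, let U and V be random elements of S and T defined on a common probability space, and let H : S × T → [0, ∞] be measurable. Let δ > 0. Set β := sup_{C ∈ 𝒮⊗𝒯} |P((U,V) ∈ C) − (law(U) ⊗ law(V))(C)| (half the total variation, in total-mass normalization, between the joint law of (U,V) and the product of its marginals), and M := max( E[H(U,V)^{1+δ}], ∫_{S×T} H^{1+δ} d(law(U) ⊗ law(V)) ). If M < ∞ then |E[H(U,V)] − ∫_{S×T} H d(law(U) ⊗ law(V))| ≤ 4 · M^{1/(1+δ)} · β^{δ/(1+δ)}. -/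
/-!
Truncate `H` at a level `K`. Below the level, `H ⊓ K` is a bounded function, and by the layer-cake
formula its integrals against two measures that differ by at most `β` on every set differ by at
most `K β`. Above the level, Markov's inequality bounds `∫ (H - K)⁺` by `M / K ^ δ` under either
measure. Taking `K = (M / β) ^ (1 / (1 + δ))` makes both errors equal to
`M ^ (1 / (1 + δ)) β ^ (δ / (1 + δ))`, which gives the bound even with constant `2`.
-/

open MeasureTheory ENNReal Set

theorem tsub_le_rpow_one_add_div_rpow (a K : ℝ≥0∞) {δ : ℝ} (hδ : 0 ≤ δ) :
    a - K ≤ a ^ (1 + δ) / K ^ δ := by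
  rcases le_or_gt a K with haK | hKa
  · simp [tsub_eq_zero_of_le haK]
  rcases eq_or_ne a ∞ with rfl | ha
  · have hK : K ^ δ ≠ ∞ := rpow_ne_top_of_nonneg hδ hKa.ne
    simp [top_rpow_of_pos (by linarith : (0:ℝ) < 1 + δ), top_div_of_ne_top hK]
  have ha0 : a ≠ 0 := (pos_of_gt hKa).ne'
  calc a - K ≤ a := tsub_le_self
    _ = a ^ (1 + δ) / a ^ δ := by rw [← ENNReal.rpow_sub _ _ ha0 ha]; norm_num
    _ ≤ a ^ (1 + δ) / K ^ δ := ENNReal.div_le_div_left (rpow_le_rpow hKa.le hδ) _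

/-- The level `K = (M / β) ^ (1 / (1 + δ))` balances the two truncation errors. -/
theorem exists_truncation_level {M β : ℝ≥0∞} {δ : ℝ} (hδ : 0 < δ) (hM : M ≠ ∞) (hβ0 : β ≠ 0)
    (hβ : β ≠ ∞) : ∃ K : ℝ≥0∞, K ≠ ∞ ∧ K * β = M ^ (1 / (1 + δ)) * β ^ (δ / (1 + δ)) ∧
      M / K ^ δ = M ^ (1 / (1 + δ)) * β ^ (δ / (1 + δ)) := by
  set c := 1 / (1 + δ)
  set d := δ / (1 + δ)
  have hc : 0 < c := by positivity
  have hd : 0 < d := by positivity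
  have hcd : c + d = 1 := by simp only [c, d]; field_simp
  have hβc0 : β ^ c ≠ 0 := (rpow_pos (pos_iff_ne_zero.2 hβ0) hβ).ne'
  have hβd0 : β ^ d ≠ 0 := (rpow_pos (pos_iff_ne_zero.2 hβ0) hβ).ne'
  refine ⟨(M / β) ^ c, rpow_ne_top_of_nonneg hc.le (div_ne_top hM hβ0), ?_, ?_⟩
  · calc (M / β) ^ c * β = M ^ c / β ^ c * (β ^ c * β ^ d) := by
          rw [div_rpow_of_nonneg _ _ hc.le, ← rpow_add _ _ hβ0 hβ, hcd, rpow_one]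
      _ = M ^ c * β ^ d := by
          rw [← mul_assoc, ENNReal.div_mul_cancel hβc0 (rpow_ne_top_of_nonneg hc.le hβ)]
  · rcases eq_or_ne M 0 with rfl | hM0
    · simp [zero_rpow_of_pos hc]
    have hMd0 : M ^ d ≠ 0 := (rpow_pos (pos_iff_ne_zero.2 hM0) hM).ne'
    have hMd : M ^ d ≠ ∞ := rpow_ne_top_of_nonneg hd.le hM
    calc M / ((M / β) ^ c) ^ δ = M ^ c * M ^ d * (β ^ d / M ^ d) := by
          rw [← rpow_mul, show c * δ = d by simp only [c, d]; ring, div_rpow_of_nonneg _ _ hd.le,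
            ← rpow_add _ _ hM0 hM, hcd, rpow_one, div_eq_mul_inv,
            ENNReal.inv_div (Or.inl (rpow_ne_top_of_nonneg hd.le hβ)) (Or.inl hβd0)]
      _ = M ^ c * β ^ d := by
          rw [mul_assoc, ← mul_div_assoc, mul_comm (M ^ d), ENNReal.mul_div_cancel_right hMd0 hMd]

theorem abs_toReal_sub_le_of_le_add {a b x : ℝ≥0∞} (hx : x ≠ ∞) (hab : a ≤ b + x)
    (hba : b ≤ a + x) : |a.toReal - b.toReal| ≤ x.toReal := by
  rcases eq_or_ne a ∞ with rfl | ha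
  · have : b = ∞ := by simpa [hx] using hab
    simp [this]
  have hb : b ≠ ∞ := ne_top_of_le_ne_top (add_ne_top.2 ⟨ha, hx⟩) hba
  have h1 := toReal_mono (add_ne_top.2 ⟨hb, hx⟩) hab
  have h2 := toReal_mono (add_ne_top.2 ⟨ha, hx⟩) hba
  rw [toReal_add hb hx] at h1
  rw [toReal_add ha hx] at h2
  exact abs_sub_le_iff.2 ⟨by linarith, by linarith⟩

section

variable {X : Type*} [MeasurableSpace X] {μ ν : Measure X} {f : X → ℝ≥0∞}

theorem lintegral_tsub_le_lintegral_rpow_div (hf : Measurable f) (K : ℝ≥0∞) {δ : ℝ}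
    (hδ : 0 ≤ δ) : ∫⁻ x, f x - K ∂μ ≤ (∫⁻ x, f x ^ (1 + δ) ∂μ) / K ^ δ := by
  calc ∫⁻ x, f x - K ∂μ ≤ ∫⁻ x, f x ^ (1 + δ) / K ^ δ ∂μ :=
        lintegral_mono fun x => tsub_le_rpow_one_add_div_rpow _ _ hδ
    _ = (∫⁻ x, f x ^ (1 + δ) ∂μ) / K ^ δ := by
        simp only [div_eq_mul_inv]
        exact lintegral_mul_const _ (hf.pow_const _)

theorem lintegral_le_lintegral_add_mul_of_le_add (hf : Measurable f) {K β : ℝ≥0∞}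
    (hK : K ≠ ∞) (hfK : ∀ x, f x ≤ K) (hμν : ∀ C, MeasurableSet C → μ C ≤ ν C + β) :
    ∫⁻ x, f x ∂μ ≤ ∫⁻ x, f x ∂ν + K * β := by
  set g : X → ℝ := fun x => (f x).toReal
  have hg : Measurable g := hf.ennreal_toReal
  have layercake : ∀ ρ : Measure X, ∫⁻ x, f x ∂ρ = ∫⁻ t in Ioi 0, ρ {x | t < g x} := by
    intro ρ
    rw [← lintegral_eq_lintegral_meas_lt ρ (ae_of_all _ fun _ => toReal_nonneg)
      hg.aemeasurable]
    exact lintegral_congr fun x => (ofReal_toReal (ne_top_of_le_ne_top hK (hfK x))).symm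
  have hlevel : ∀ t ∈ Ioi (0 : ℝ),
      μ {x | t < g x} ≤ ν {x | t < g x} + (Ioc 0 K.toReal).indicator (fun _ => β) t := by
    intro t ht
    rcases le_or_gt t K.toReal with htK | hKt
    · rw [indicator_of_mem (mem_Ioc.2 ⟨ht, htK⟩)]
      exact hμν _ (measurableSet_lt measurable_const hg)
    · have : {x | t < g x} = ∅ :=
        eq_empty_of_forall_notMem fun x hx => (toReal_mono hK (hfK x)).not_gt (hKt.trans hx)
      simp [this]
  rw [layercake μ, layercake ν]
  calc ∫⁻ t in Ioi 0, μ {x | t < g x}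
      ≤ ∫⁻ t in Ioi 0, ν {x | t < g x} + (Ioc 0 K.toReal).indicator (fun _ => β) t :=
        setLIntegral_mono' measurableSet_Ioi hlevel
    _ = (∫⁻ t in Ioi 0, ν {x | t < g x}) + K * β := by
        rw [lintegral_add_right _ (measurable_const.indicator measurableSet_Ioc),
          lintegral_indicator measurableSet_Ioc, setLIntegral_const,
          Measure.restrict_apply measurableSet_Ioc, inter_eq_left.2 Ioc_subset_Ioi_self,
          Real.volume_Ioc, sub_zero, ofReal_toReal hK, mul_comm]

theorem lintegral_le_lintegral_add_of_le_add (hf : Measurable f) {δ : ℝ} (hδ : 0 < δ)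
    {β : ℝ≥0∞} (hβ : β ≠ ∞) (hmoment : ∫⁻ x, f x ^ (1 + δ) ∂μ ≠ ∞)
    (hμν : ∀ C, MeasurableSet C → μ C ≤ ν C + β) :
    ∫⁻ x, f x ∂μ ≤ ∫⁻ x, f x ∂ν +
      2 * ((∫⁻ x, f x ^ (1 + δ) ∂μ) ^ (1 / (1 + δ)) * β ^ (δ / (1 + δ))) := by
  rcases eq_or_ne β 0 with rfl | hβ0
  · exact le_add_right <| lintegral_mono' (Measure.le_iff.2 fun C hC => by simpa using hμν C hC)
      le_rfl
  obtain ⟨K, hK, hKβ, hKδ⟩ := exists_truncation_level hδ hmoment hβ0 hβ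
  calc ∫⁻ x, f x ∂μ = ∫⁻ x, min (f x) K ∂μ + ∫⁻ x, f x - K ∂μ := by
        rw [← lintegral_add_left (hf.min measurable_const)]
        simp_rw [add_comm (min _ K), tsub_add_min]
    _ ≤ (∫⁻ x, min (f x) K ∂ν + K * β) + (∫⁻ x, f x ^ (1 + δ) ∂μ) / K ^ δ :=
        add_le_add
          (lintegral_le_lintegral_add_mul_of_le_add (hf.min measurable_const) hK
            (fun _ => min_le_right _ _) hμν)
          (lintegral_tsub_le_lintegral_rpow_div hf K hδ.le)
    _ ≤ ∫⁻ x, f x ∂ν +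
          2 * ((∫⁻ x, f x ^ (1 + δ) ∂μ) ^ (1 / (1 + δ)) * β ^ (δ / (1 + δ))) := by
        rw [hKβ, hKδ, two_mul, ← add_assoc]
        gcongr
        exact min_le_left _ _

theorem abs_toReal_lintegral_sub_le (hf : Measurable f) {δ : ℝ} (hδ : 0 < δ) {β M : ℝ≥0∞}
    (hβ : β ≠ ∞) (hM : M ≠ ∞) (hμM : ∫⁻ x, f x ^ (1 + δ) ∂μ ≤ M)
    (hνM : ∫⁻ x, f x ^ (1 + δ) ∂ν ≤ M)
    (hμν : ∀ C, MeasurableSet C → μ C ≤ ν C + β ∧ ν C ≤ μ C + β) :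
    |(∫⁻ x, f x ∂μ).toReal - (∫⁻ x, f x ∂ν).toReal| ≤
      2 * M.toReal ^ (1 / (1 + δ)) * β.toReal ^ (δ / (1 + δ)) := by
  have one_sided : ∀ {ρ ρ' : Measure X}, ∫⁻ x, f x ^ (1 + δ) ∂ρ ≤ M →
      (∀ C, MeasurableSet C → ρ C ≤ ρ' C + β) →
      ∫⁻ x, f x ∂ρ ≤ ∫⁻ x, f x ∂ρ' + 2 * (M ^ (1 / (1 + δ)) * β ^ (δ / (1 + δ))) := by
    intro ρ ρ' hρM hρρ'
    refine (lintegral_le_lintegral_add_of_le_add hf hδ hβ (ne_top_of_le_ne_top hM hρM)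
      hρρ').trans ?_
    gcongr
  have hE : 2 * (M ^ (1 / (1 + δ)) * β ^ (δ / (1 + δ))) ≠ ∞ := by
    refine mul_ne_top ofNat_ne_top (mul_ne_top ?_ ?_) <;>
      exact rpow_ne_top_of_nonneg (by positivity) ‹_›
  refine (abs_toReal_sub_le_of_le_add hE (one_sided hμM fun C hC => (hμν C hC).1)
    (one_sided hνM fun C hC => (hμν C hC).2)).trans_eq ?_
  simp [toReal_rpow, mul_assoc]

end

/-- The β-mixing covariance-type inequality (adapted from Yoshihara): for random elements
`U`, `V` and a nonnegative measurable `H`, the expectation of `H (U, V)` differs from its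
expectation under the product of the marginal laws by at most
`4 * M^(1/(1+δ)) * β^(δ/(1+δ))`, where `β` is half the total variation distance between the
joint law and the product of the marginals and `M` bounds the `(1+δ)`-moments. -/
theorem stmt1 {Ω S T : Type*} [MeasurableSpace Ω] [MeasurableSpace S] [MeasurableSpace T]
    (P : Measure Ω) [IsProbabilityMeasure P]
    (U : Ω → S) (V : Ω → T) (hU : Measurable U) (hV : Measurable V)
    (H : S × T → ℝ≥0∞) (hH : Measurable H)
    (δ : ℝ) (hδ : 0 < δ)
    (β M : ℝ≥0∞)
    (hβ : β = ⨆ (C : Set (S × T)) (_ : MeasurableSet C),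
        ((P.map (fun ω => (U ω, V ω))) C - ((P.map U).prod (P.map V)) C) ⊔
          (((P.map U).prod (P.map V)) C - (P.map (fun ω => (U ω, V ω))) C))
    (hM : M = max (∫⁻ ω, H (U ω, V ω) ^ (1 + δ) ∂P)
        (∫⁻ x, H x ^ (1 + δ) ∂((P.map U).prod (P.map V))))
    (hMfin : M ≠ ∞) :
    |(∫⁻ ω, H (U ω, V ω) ∂P).toReal - (∫⁻ x, H x ∂((P.map U).prod (P.map V))).toReal|
      ≤ 4 * M.toReal ^ (1 / (1 + δ)) * β.toReal ^ (δ / (1 + δ)) := by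
  have hUV : Measurable fun ω => (U ω, V ω) := hU.prodMk hV
  set μ := P.map fun ω => (U ω, V ω)
  set ν := (P.map U).prod (P.map V)
  have : IsProbabilityMeasure μ := Measure.isProbabilityMeasure_map hUV.aemeasurable
  have : IsProbabilityMeasure (P.map U) := Measure.isProbabilityMeasure_map hU.aemeasurable
  have : IsProbabilityMeasure (P.map V) := Measure.isProbabilityMeasure_map hV.aemeasurable
  have hdist : ∀ C, MeasurableSet C → μ C ≤ ν C + β ∧ ν C ≤ μ C + β := by
    intro C hC
    have hC : (μ C - ν C) ⊔ (ν C - μ C) ≤ β :=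
      hβ ▸ le_iSup₂ (f := fun C (_ : MeasurableSet C) => (μ C - ν C) ⊔ (ν C - μ C)) C hC
    exact ⟨tsub_le_iff_left.1 (le_sup_left.trans hC), tsub_le_iff_left.1 (le_sup_right.trans hC)⟩
  have hβ_le_one : β ≤ 1 := hβ ▸ iSup₂_le fun C _ =>
    sup_le (tsub_le_self.trans prob_le_one) (tsub_le_self.trans prob_le_one)
  rw [← lintegral_map hH hUV]
  rw [← lintegral_map (hH.pow_const _) hUV] at hM
  refine (abs_toReal_lintegral_sub_le hH hδ (ne_top_of_le_ne_top one_ne_top hβ_le_one) hMfin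
    (hM ▸ le_max_left _ _) (hM ▸ le_max_right _ _) hdist).trans ?_
  gcongr
  norm_num
end

section
/- Let p₀, p₁, p₂ ≥ 0 with p₀ + p₁ + p₂ = 1 and p₁ > 0, and let τ > 0. Define a(v) := 2v² arccos(1/(2v)) − (1/2)√(4v² − 1) for v ≥ 1 and G(v) := (p₁/(p₁ + 2p₂)) · exp(−(p₁ π v² + p₂(2π v² − a(v)))) for v ≥ 1. For n large, let v_n be the positive root of π(p₁ + p₂) v² + 2 p₂ v = log(n p₁ / (τ (p₁ + 2p₂))), i.e. v_n = (−p₂ + √(p₂² + π(p₁+p₂) · log(n p₁/(τ(p₁+2p₂))))) / (π(p₁+p₂)). Then n · G(v_n) = τ + O((log n)^{−1/2}) as n → ∞. -/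
open Real Filter

/-! The threshold `v_n` solves `π(p₁ + p₂)v² + 2p₂v = log (n p₁ / (τ(p₁ + 2p₂)))` exactly, and this
makes `n G(v_n) = τ exp (p₂ (a(v_n) - (πv_n² - 2v_n)))`. The lens `a(v)` is a disc of radius `v`
minus a strip of width `1` up to an error `1/(4v)` (from `arcsin x = x + O(x³)` and
`√(4v² - 1) = 2v + O(1/v)`), so `n G(v_n) - τ = O(1/v_n)`; and `v_n ≍ √(log n)`. -/

theorem Real.le_arcsin_self {x : ℝ} (h0 : 0 ≤ x) (h1 : x ≤ 1) : x ≤ arcsin x :=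
  (le_arcsin_iff_sin_le ⟨by linarith [pi_gt_three], by linarith [pi_gt_three]⟩
    ⟨by linarith, h1⟩).2 (sin_le h0)

theorem Real.arcsin_le_add_pow_three {x : ℝ} (h0 : 0 ≤ x) (h1 : x ≤ 1 / 2) :
    arcsin x ≤ x + x ^ 3 := by
  have hx3 : x ^ 3 ≤ (1 / 2) ^ 3 := pow_le_pow_left₀ h0 h1 3
  have hcube : (x + x ^ 3) ^ 3 ≤ 6 * x ^ 3 := by
    have : (1 + x ^ 2) ^ 3 ≤ (1 + (1 / 2) ^ 2) ^ 3 := by gcongr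
    calc (x + x ^ 3) ^ 3 = (1 + x ^ 2) ^ 3 * x ^ 3 := by ring
      _ ≤ 6 * x ^ 3 := by gcongr; linarith
  refine (arcsin_le_iff_le_sin ⟨by linarith, by linarith⟩
    ⟨by linarith [pi_gt_three, pow_nonneg h0 3], by linarith [pi_gt_three]⟩).2 ?_
  linarith [sin_ge_sub_cube (by positivity : 0 ≤ x + x ^ 3)]

/-- Area of the intersection of two discs of radius `v` whose centres are at distance `1`. -/
noncomputable def lensArea (v : ℝ) : ℝ :=
  2 * v ^ 2 * Real.arccos (1 / (2 * v)) - (1 / 2) * Real.sqrt (4 * v ^ 2 - 1)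

lemma abs_lensArea_sub_le {v : ℝ} (hv : 1 ≤ v) :
    |lensArea v - (π * v ^ 2 - 2 * v)| ≤ 1 / (4 * v) := by
  have hv0 : 0 < v := by linarith
  set x := 1 / (2 * v) with hx
  have hx0 : 0 ≤ x := by positivity
  have hx1 : x ≤ 1 / 2 := by
    rw [hx, div_le_div_iff₀ (by positivity) (by norm_num)]; linarith
  have hvx : 2 * v ^ 2 * x = v := by rw [hx]; field_simp
  have hvx3 : 2 * v ^ 2 * x ^ 3 = x / 2 := by rw [hx]; field_simp
  have hx4 : 1 / (4 * v) = x / 2 := by rw [hx]; ring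
  have harcsin_lo : 2 * v ^ 2 * x ≤ 2 * v ^ 2 * arcsin x := by
    gcongr; exact le_arcsin_self hx0 (by linarith)
  have harcsin_hi : 2 * v ^ 2 * arcsin x ≤ 2 * v ^ 2 * (x + x ^ 3) := by
    gcongr; exact arcsin_le_add_pow_three hx0 hx1
  have hsqrt_lo : 2 * v - x ≤ √(4 * v ^ 2 - 1) := by
    refine le_sqrt_of_sq_le ?_
    have h : (2 * v - x) ^ 2 = 4 * v ^ 2 - 2 + x ^ 2 := by
      rw [sub_sq, mul_assoc, hx]; field_simp; ring
    nlinarith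
  have hsqrt_hi : √(4 * v ^ 2 - 1) ≤ 2 * v :=
    (sqrt_le_left (by linarith)).2 (by linarith)
  rw [lensArea, ← hx, hx4, arccos_eq_pi_div_two_sub_arcsin, abs_le]
  constructor <;> linarith

lemma abs_exp_mul_lensArea_sub_sub_one_le {b w : ℝ} (hb : 0 ≤ b) (hw : 1 ≤ w) (hbw : b ≤ 4 * w) :
    |exp (b * (lensArea w - (π * w ^ 2 - 2 * w))) - 1| ≤ b / (2 * w) := by
  have hw0 : 0 < w := by linarith
  have hE : |b * (lensArea w - (π * w ^ 2 - 2 * w))| ≤ b / (4 * w) := by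
    rw [abs_mul, abs_of_nonneg hb, ← mul_one_div]
    exact mul_le_mul_of_nonneg_left (abs_lensArea_sub_le hw) hb
  calc |exp (b * (lensArea w - (π * w ^ 2 - 2 * w))) - 1|
      ≤ 2 * |b * (lensArea w - (π * w ^ 2 - 2 * w))| :=
        abs_exp_sub_one_le (hE.trans ((div_le_one (by positivity)).2 hbw))
    _ ≤ 2 * (b / (4 * w)) := by gcongr
    _ = b / (2 * w) := by field_simp; ring

noncomputable def quadRoot (b c L : ℝ) : ℝ := (-b + √(b ^ 2 + c * L)) / c

lemma quadRoot_spec {b c L : ℝ} (hc : c ≠ 0) (h : 0 ≤ b ^ 2 + c * L) :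
    c * quadRoot b c L ^ 2 + 2 * b * quadRoot b c L = L := by
  have hw : c * quadRoot b c L = -b + √(b ^ 2 + c * L) := mul_div_cancel₀ _ hc
  apply mul_left_cancel₀ hc
  linear_combination (c * quadRoot b c L + √(b ^ 2 + c * L) + b) * hw + sq_sqrt h

lemma le_quadRoot {b c L t : ℝ} (hc : 0 < c) (h : c * t ^ 2 + 2 * b * t ≤ L) :
    t ≤ quadRoot b c L := by
  have : c * t + b ≤ √(b ^ 2 + c * L) :=
    (le_abs_self _).trans (abs_le_sqrt (by nlinarith [mul_le_mul_of_nonneg_left h hc.le]))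
  rw [quadRoot, le_div_iff₀ hc]
  linarith

lemma le_mul_quadRoot_sq {b c L : ℝ} (hb : 0 ≤ b) (hc : 0 < c) (hL : c + 2 * b ≤ L) :
    L ≤ (c + 2 * b) * quadRoot b c L ^ 2 := by
  have h1 : 1 ≤ quadRoot b c L := le_quadRoot hc (by linarith)
  have h := quadRoot_spec (b := b) (L := L) hc.ne' (by nlinarith)
  have h2 : quadRoot b c L ≤ quadRoot b c L ^ 2 := by nlinarith
  nlinarith [mul_le_mul_of_nonneg_left h2 hb]

/-- The paper's `G(v)`: the reduced-Palm void probability of the ball of radius `v ≥ 1`. -/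
noncomputable def voidProb (p₁ p₂ v : ℝ) : ℝ :=
  p₁ / (p₁ + 2 * p₂) * exp (-(p₁ * π * v ^ 2 + p₂ * (2 * π * v ^ 2 - lensArea v)))

lemma mul_voidProb_eq_of_quadratic {p₁ p₂ τ n w : ℝ} (h1 : 0 < p₁) (h2 : 0 ≤ p₂) (hτ : 0 < τ)
    (hn : 0 < n)
    (hw : π * (p₁ + p₂) * w ^ 2 + 2 * p₂ * w = log (n * p₁ / (τ * (p₁ + 2 * p₂)))) :
    n * voidProb p₁ p₂ w = τ * exp (p₂ * (lensArea w - (π * w ^ 2 - 2 * w))) := by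
  have hexp : -(p₁ * π * w ^ 2 + p₂ * (2 * π * w ^ 2 - lensArea w)) =
      -log (n * p₁ / (τ * (p₁ + 2 * p₂))) + p₂ * (lensArea w - (π * w ^ 2 - 2 * w)) := by
    rw [← hw]; ring
  rw [voidProb, hexp, exp_add, exp_neg, exp_log (by positivity)]
  field_simp

lemma abs_mul_voidProb_quadRoot_sub_le {p₁ p₂ τ n L x : ℝ} (h1 : 0 < p₁) (h2 : 0 ≤ p₂)
    (hτ : 0 < τ) (hn : 0 < n) (hL : L = log (n * p₁ / (τ * (p₁ + 2 * p₂))))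
    (hL1 : π * (p₁ + p₂) + 2 * p₂ ≤ L)
    (hL2 : π * (p₁ + p₂) * (p₂ / 4) ^ 2 + 2 * p₂ * (p₂ / 4) ≤ L) (hx : 0 < x) (hxL : x ≤ 2 * L) :
    |n * voidProb p₁ p₂ (quadRoot p₂ (π * (p₁ + p₂)) L) - τ| ≤
      τ * p₂ * √(2 * (π * (p₁ + p₂) + 2 * p₂)) / 2 / √x := by
  have hc : 0 < π * (p₁ + p₂) := by positivity
  set w := quadRoot p₂ (π * (p₁ + p₂)) L
  have hw1 : 1 ≤ w := le_quadRoot hc (by linarith)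
  have hw2 : p₂ ≤ 4 * w := by linarith [le_quadRoot (t := p₂ / 4) hc hL2]
  have hsqrt : √x ≤ √(2 * (π * (p₁ + p₂) + 2 * p₂)) * w := by
    rw [← sqrt_sq (by linarith : 0 ≤ w), ← sqrt_mul (by positivity)]
    exact sqrt_le_sqrt (by nlinarith [le_mul_quadRoot_sq h2 hc hL1])
  rw [mul_voidProb_eq_of_quadratic h1 h2 hτ hn (hL ▸ quadRoot_spec hc.ne' (by nlinarith)),
    ← mul_sub_one, abs_mul, abs_of_pos hτ, le_div_iff₀ (sqrt_pos.2 hx)]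
  calc τ * |exp (p₂ * (lensArea w - (π * w ^ 2 - 2 * w))) - 1| * √x
      ≤ τ * (p₂ / (2 * w)) * (√(2 * (π * (p₁ + p₂) + 2 * p₂)) * w) := by
        gcongr; exact abs_exp_mul_lensArea_sub_sub_one_le h2 hw1 hw2
    _ = τ * p₂ * √(2 * (π * (p₁ + p₂) + 2 * p₂)) / 2 := by field_simp

theorem stmt7_general (p₁ p₂ τ : ℝ) (h1 : 0 < p₁) (h2 : 0 ≤ p₂)
    (hτ : 0 < τ)
    (a G : ℝ → ℝ)
    (ha : ∀ v ≥ (1 : ℝ), a v = 2 * v ^ 2 * Real.arccos (1 / (2 * v)) -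
        (1 / 2) * Real.sqrt (4 * v ^ 2 - 1))
    (hG : ∀ v ≥ (1 : ℝ), G v =
        (p₁ / (p₁ + 2 * p₂)) * Real.exp (-(p₁ * π * v ^ 2 + p₂ * (2 * π * v ^ 2 - a v))))
    (v : ℕ → ℝ)
    (hv : ∀ n : ℕ, v n =
        (-p₂ + Real.sqrt (p₂ ^ 2 + π * (p₁ + p₂) *
            Real.log ((n : ℝ) * p₁ / (τ * (p₁ + 2 * p₂))))) / (π * (p₁ + p₂))) :
    ∃ C > (0 : ℝ), ∃ N : ℕ, ∀ n : ℕ, N ≤ n →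
      |(n : ℝ) * G (v n) - τ| ≤ C / Real.sqrt (Real.log n) := by
  set c := π * (p₁ + p₂)
  set K := p₁ / (τ * (p₁ + 2 * p₂))
  set C := τ * p₂ * √(2 * (c + 2 * p₂)) / 2
  have hc : 0 < c := by positivity
  have hK : 0 < K := by positivity
  have hlog : Tendsto (fun n : ℕ => log n) atTop atTop :=
    tendsto_log_atTop.comp tendsto_natCast_atTop_atTop
  have hbound : ∀ᶠ n : ℕ in atTop, |n * G (v n) - τ| ≤ C / √(log n) := by
    filter_upwards [hlog.eventually_gt_atTop 0, hlog.eventually_ge_atTop (-2 * log K),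
      hlog.eventually_ge_atTop (2 * (c + 2 * p₂)),
      hlog.eventually_ge_atTop (2 * (c * (p₂ / 4) ^ 2 + 2 * p₂ * (p₂ / 4)))]
      with n hn0 hnK hn1 hn2
    have hn : (0 : ℝ) < n := by linarith [(log_pos_iff n.cast_nonneg).1 hn0]
    have hL : log n / 2 ≤ log (n * p₁ / (τ * (p₁ + 2 * p₂))) := by
      rw [mul_div_assoc, log_mul hn.ne' hK.ne']; linarith
    have hv1 : 1 ≤ v n := (hv n).symm ▸ le_quadRoot hc (by linarith)
    have hGv : G (v n) = voidProb p₁ p₂ (v n) := by rw [hG _ hv1, ha _ hv1]; rfl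
    rw [hGv, hv n]
    exact abs_mul_voidProb_quadRoot_sub_le h1 h2 hτ hn rfl (by linarith) (by linarith) hn0
      (by linarith)
  obtain ⟨N, hN⟩ := eventually_atTop.1 hbound
  exact ⟨C + 1, by positivity, N, fun n hn => (hN n hn).trans (by gcongr; linarith)⟩

/-- For the Gauss–Poisson void-probability function
`G(v) = (p₁/(p₁+2p₂)) exp(-(p₁πv² + p₂(2πv² - a(v))))` with
`a(v) = 2v² arccos(1/(2v)) - (1/2)√(4v² - 1)` (for `v ≥ 1`), and the threshold `v_n`
defined as the positive root of `π(p₁+p₂)v² + 2p₂v = log(np₁/(τ(p₁+2p₂)))`, one has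
`n·G(v_n) = τ + O((log n)^{-1/2})` as `n → ∞`. -/
theorem stmt7 (p₀ p₁ p₂ τ : ℝ) (h0 : 0 ≤ p₀) (h1 : 0 < p₁) (h2 : 0 ≤ p₂)
    (hsum : p₀ + p₁ + p₂ = 1) (hτ : 0 < τ)
    (a G : ℝ → ℝ)
    (ha : ∀ v ≥ (1 : ℝ), a v = 2 * v ^ 2 * Real.arccos (1 / (2 * v)) -
        (1 / 2) * Real.sqrt (4 * v ^ 2 - 1))
    (hG : ∀ v ≥ (1 : ℝ), G v =
        (p₁ / (p₁ + 2 * p₂)) * Real.exp (-(p₁ * π * v ^ 2 + p₂ * (2 * π * v ^ 2 - a v))))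
    (v : ℕ → ℝ)
    (hv : ∀ n : ℕ, v n =
        (-p₂ + Real.sqrt (p₂ ^ 2 + π * (p₁ + p₂) *
            Real.log ((n : ℝ) * p₁ / (τ * (p₁ + 2 * p₂))))) / (π * (p₁ + p₂))) :
    ∃ C > (0 : ℝ), ∃ N : ℕ, ∀ n : ℕ, N ≤ n →
      |(n : ℝ) * G (v n) - τ| ≤ C / Real.sqrt (Real.log n) :=
  stmt7_general p₁ p₂ τ h1 h2 hτ a G ha hG v hv
end

section
/- For every v > 0, ∫₀^{v} ∫₀^{v} ( αβ / (α² + β²) )³ dβ dα = v²/16, where the (bounded) integrand is extended by 0 at the origin. -/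
/-!
Both integrations are elementary. For `α ≠ 0` the integrand has the `β`-antiderivative
`-α³ (α² + 2β²) / (4 (α² + β²)²)`, so the inner integral is `α v⁴ / (4 (α² + v²)²)`
(also for `α = 0`, where the integrand vanishes), and this is `v⁴/4` times the derivative
in `α` of `-1 / (2 (α² + v²))`.
-/

open intervalIntegral

theorem integral_div_sq_add_sq_sq (a b c : ℝ) (hc : c ≠ 0) :
    ∫ x in a..b, x / (x ^ 2 + c ^ 2) ^ 2 = ((a ^ 2 + c ^ 2)⁻¹ - (b ^ 2 + c ^ 2)⁻¹) / 2 := by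
  have hpos : ∀ x : ℝ, 0 < x ^ 2 + c ^ 2 := fun x => by positivity
  have hderiv : ∀ x : ℝ,
      HasDerivAt (fun x => -(x ^ 2 + c ^ 2)⁻¹ / 2) (x / (x ^ 2 + c ^ 2) ^ 2) x := fun x =>
    (((hasDerivAt_pow 2 x).add_const (c ^ 2)).fun_inv (hpos x).ne' |>.fun_neg.div_const 2
      |>.congr_deriv (by ring))
  have hcont : Continuous fun x : ℝ => x / (x ^ 2 + c ^ 2) ^ 2 := by
    fun_prop (disch := exact fun x => (pow_pos (hpos x) 2).ne')
  rw [integral_eq_sub_of_hasDerivAt (fun x _ => hderiv x) (hcont.intervalIntegrable a b)]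
  ring

theorem integral_mul_div_sq_add_sq_pow_three (a b : ℝ) :
    ∫ x in (0 : ℝ)..b, (a * x / (a ^ 2 + x ^ 2)) ^ 3 = a * b ^ 4 / (4 * (a ^ 2 + b ^ 2) ^ 2) := by
  rcases eq_or_ne a 0 with rfl | ha
  · simp
  have hpos : ∀ x : ℝ, 0 < a ^ 2 + x ^ 2 := fun x => by positivity
  have hderiv : ∀ x : ℝ, HasDerivAt
      (fun x => -(a ^ 3 * (a ^ 2 + 2 * x ^ 2)) / (4 * (a ^ 2 + x ^ 2) ^ 2))
      ((a * x / (a ^ 2 + x ^ 2)) ^ 3) x := by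
    intro x
    have hu : HasDerivAt (fun x => a ^ 2 + x ^ 2) (2 * x) x :=
      ((hasDerivAt_pow 2 x).const_add (a ^ 2)).congr_deriv (by ring)
    have hnum := (((hasDerivAt_pow 2 x).const_mul 2).const_add (a ^ 2)).const_mul (a ^ 3) |>.fun_neg
    have hden := (hu.fun_pow 2).const_mul 4
    refine (hnum.fun_div hden (by positivity)).congr_deriv ?_
    have hx := (hpos x).ne'
    field_simp
    ring
  have hcont : Continuous fun x : ℝ => (a * x / (a ^ 2 + x ^ 2)) ^ 3 := by
    fun_prop (disch := exact fun x => (hpos x).ne')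
  rw [integral_eq_sub_of_hasDerivAt (fun x _ => hderiv x) (hcont.intervalIntegrable 0 b)]
  have hb := (hpos b).ne'
  field_simp
  ring

theorem stmt11_general (v : ℝ) :
    ∫ α in (0 : ℝ)..v, ∫ β in (0 : ℝ)..v, (α * β / (α ^ 2 + β ^ 2)) ^ 3 = v ^ 2 / 16 := by
  rcases eq_or_ne v 0 with rfl | hv
  · simp
  have hinner : ∀ α : ℝ, ∫ β in (0 : ℝ)..v, (α * β / (α ^ 2 + β ^ 2)) ^ 3
      = v ^ 4 / 4 * (α / (α ^ 2 + v ^ 2) ^ 2) := fun α => by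
    rw [integral_mul_div_sq_add_sq_pow_three, div_mul_div_comm, mul_comm (v ^ 4)]
  simp_rw [hinner, integral_const_mul, integral_div_sq_add_sq_sq _ _ _ hv]
  field_simp
  ring

/-- For every `v > 0`, `∫₀^v ∫₀^v (αβ/(α² + β²))³ dβ dα = v²/16` (the bounded integrand
being extended by `0` at the origin, which is Lean's convention for division by zero). -/
theorem stmt11 (v : ℝ) (hv : 0 < v) :
    ∫ α in (0 : ℝ)..v, ∫ β in (0 : ℝ)..v, (α * β / (α ^ 2 + β ^ 2)) ^ 3 = v ^ 2 / 16 :=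
  stmt11_general v
end

section
/- For (α, β) ∈ (0, π/3]², define I(α, β) := ((π − 3α) cos α + sin 3α) · ((π − 3β) cos β + sin 3β) · ( sin α · sin β / ( sin²β · (π − α + sin α cos α) + sin²α · (π − β + sin β cos β) ) )³. Then as v → 0⁺, ∫₀^{v} ∫₀^{v} I(α, β) dβ dα = v²/(16π) + o(v²). -/
/-!
Near the origin `sin t ∼ t`, while `(π - 3t) cos t + sin 3t` and `π - t + sin t cos t` both tend
to `π`. Hence on a small square `(0, v]²` the integrand agrees, up to a factor `c ^ 17` with `c`
as close to `1` as we like, with the homogeneous model `π⁻¹ (αβ / (α² + β²))³`. Integrating the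
pointwise relative error gives the same relative error for the integrals, and the model integrates
over `(0, v]²` to exactly `v² / (16π)` by explicit antiderivatives.
-/

open Real Filter Topology MeasureTheory Set Function

def WithinFactor (c x y : ℝ) : Prop := 0 < x ∧ 0 < y ∧ x ≤ c * y ∧ y ≤ c * x

namespace WithinFactor

variable {c d x y x' y' t : ℝ}

lemma mul (h : WithinFactor c x y) (h' : WithinFactor d x' y') :
    WithinFactor (c * d) (x * x') (y * y') := by
  obtain ⟨hx, hy, hxy, hyx⟩ := h
  obtain ⟨hx', hy', hxy', hyx'⟩ := h'
  refine ⟨mul_pos hx hx', mul_pos hy hy', ?_, ?_⟩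
  · calc x * x' ≤ (c * y) * (d * y') := mul_le_mul hxy hxy' hx'.le (hx.le.trans hxy)
      _ = c * d * (y * y') := by ring
  · calc y * y' ≤ (c * x) * (d * x') := mul_le_mul hyx hyx' hy'.le (hy.le.trans hyx)
      _ = c * d * (x * x') := by ring

lemma inv (h : WithinFactor c x y) : WithinFactor c x⁻¹ y⁻¹ := by
  obtain ⟨hx, hy, hxy, hyx⟩ := h
  refine ⟨inv_pos.2 hx, inv_pos.2 hy, ?_, ?_⟩
  · rw [← div_eq_mul_inv, inv_le_iff_one_le_mul₀ hx, div_mul_eq_mul_div, le_div_iff₀ hy]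
    linarith
  · rw [← div_eq_mul_inv, inv_le_iff_one_le_mul₀ hy, div_mul_eq_mul_div, le_div_iff₀ hx]
    linarith

lemma div (h : WithinFactor c x y) (h' : WithinFactor d x' y') :
    WithinFactor (c * d) (x / x') (y / y') := by
  simpa only [div_eq_mul_inv] using h.mul h'.inv

lemma pow (h : WithinFactor c x y) : ∀ n : ℕ, WithinFactor (c ^ n) (x ^ n) (y ^ n)
  | 0 => by simp [WithinFactor]
  | n + 1 => by simpa only [pow_succ] using (h.pow n).mul h

lemma add (h : WithinFactor c x y) (h' : WithinFactor c x' y') :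
    WithinFactor c (x + x') (y + y') := by
  obtain ⟨hx, hy, hxy, hyx⟩ := h
  obtain ⟨hx', hy', hxy', hyx'⟩ := h'
  exact ⟨add_pos hx hx', add_pos hy hy', by linarith, by linarith⟩

lemma mul_right (h : WithinFactor c x y) (ht : 0 < t) : WithinFactor c (x * t) (y * t) := by
  obtain ⟨hx, hy, hxy, hyx⟩ := h
  refine ⟨mul_pos hx ht, mul_pos hy ht, ?_, ?_⟩ <;> nlinarith

lemma abs_sub_le (h : WithinFactor c x y) : |x - y| ≤ (c - 1) * y := by
  obtain ⟨hx, hy, hxy, hyx⟩ := h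
  have hc : 0 < c := pos_of_mul_pos_left (hy.trans_le hyx) hx.le
  rw [abs_sub_le_iff]
  constructor
  · linarith
  · nlinarith [mul_nonneg (sq_nonneg (c - 1)) hy.le]

end WithinFactor

lemma exists_one_lt_pow_le_one_add (n : ℕ) {ε : ℝ} (hε : 0 < ε) :
    ∃ c : ℝ, 1 < c ∧ c ^ n ≤ 1 + ε := by
  have hlim : Tendsto (fun c : ℝ => c ^ n) (𝓝[>] 1) (𝓝 1) := by
    simpa using ((continuous_pow n).tendsto (1 : ℝ)).mono_left nhdsWithin_le_nhds
  exact (eventually_mem_nhdsWithin.and (hlim.eventually (eventually_le_nhds (by linarith)))).exists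

lemma Filter.Tendsto.eventually_withinFactor {ι : Type*} {l : Filter ι} {f : ι → ℝ} {y c : ℝ}
    (hf : Tendsto f l (𝓝 y)) (hy : 0 < y) (hc : 1 < c) : ∀ᶠ i in l, WithinFactor c (f i) y := by
  have hc0 : 0 < c := one_pos.trans hc
  filter_upwards [hf (Ioo_mem_nhds (div_lt_self hy hc) (lt_mul_left hy hc))] with i ⟨hlo, hhi⟩
  exact ⟨(div_pos hy hc0).trans hlo, hy, hhi.le, (div_lt_iff₀' hc0).1 hlo |>.le⟩

section RelativeError

variable {X : Type*} [MeasurableSpace X] {μ : Measure X} {f g : X → ℝ} {δ : ℝ}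

lemma MeasureTheory.Integrable.of_abs_sub_le_mul (hf : AEStronglyMeasurable f μ)
    (hg : Integrable g μ) (h : ∀ᵐ x ∂μ, |f x - g x| ≤ δ * g x) : Integrable f μ := by
  refine (hg.const_mul δ |>.add hg.abs).mono' hf (h.mono fun x hx => ?_)
  rw [Real.norm_eq_abs, Pi.add_apply]
  linarith [abs_sub_abs_le_abs_sub (f x) (g x)]

lemma abs_integral_sub_le_of_abs_sub_le_mul (hf : AEStronglyMeasurable f μ)
    (hg : Integrable g μ) (h : ∀ᵐ x ∂μ, |f x - g x| ≤ δ * g x) :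
    |∫ x, f x ∂μ - ∫ x, g x ∂μ| ≤ δ * ∫ x, g x ∂μ := by
  rw [← integral_sub (hg.of_abs_sub_le_mul hf h) hg, ← integral_const_mul]
  exact norm_integral_le_of_norm_le (f := fun x => f x - g x) (hg.const_mul δ) h

end RelativeError

lemma intervalIntegral_intervalIntegral_eq_integral_prod {f : ℝ → ℝ → ℝ} {a b c d : ℝ}
    (hab : a ≤ b) (hcd : c ≤ d)
    (hf : Integrable (uncurry f) ((volume.restrict (Ioc a b)).prod (volume.restrict (Ioc c d)))) :
    ∫ x in a..b, ∫ y in c..d, f x y =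
      ∫ p, uncurry f p ∂(volume.restrict (Ioc a b)).prod (volume.restrict (Ioc c d)) := by
  simp only [intervalIntegral.integral_of_le hab, intervalIntegral.integral_of_le hcd]
  exact integral_integral hf

noncomputable def outerFactor (t : ℝ) : ℝ := (π - 3 * t) * cos t + sin (3 * t)

noncomputable def denomWeight (t : ℝ) : ℝ := π - t + sin t * cos t

noncomputable def delaunayIntegrand (α β : ℝ) : ℝ :=
  outerFactor α * outerFactor β *
    (sin α * sin β / (sin β ^ 2 * denomWeight α + sin α ^ 2 * denomWeight β)) ^ 3

noncomputable def delaunayModel (α β : ℝ) : ℝ := π⁻¹ * (α * β / (α ^ 2 + β ^ 2)) ^ 3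

noncomputable def delaunayModelMarginal (v α : ℝ) : ℝ := v ^ 4 * α / (4 * π * (α ^ 2 + v ^ 2) ^ 2)

def SmallAngle (c t : ℝ) : Prop :=
  WithinFactor c (sin t) t ∧ WithinFactor c (outerFactor t) π ∧ WithinFactor c (denomWeight t) π

lemma eventually_smallAngle {c : ℝ} (hc : 1 < c) : ∀ᶠ t in 𝓝[>] 0, SmallAngle c t := by
  have hsinc : Tendsto sinc (𝓝 0) (𝓝 1) := by
    simpa only [sinc_zero] using continuous_sinc.tendsto 0
  have houter : Tendsto outerFactor (𝓝 0) (𝓝 π) := by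
    have h : Continuous outerFactor := by unfold outerFactor; fun_prop
    simpa [outerFactor] using h.tendsto 0
  have hdenom : Tendsto denomWeight (𝓝 0) (𝓝 π) := by
    have h : Continuous denomWeight := by unfold denomWeight; fun_prop
    simpa [denomWeight] using h.tendsto 0
  filter_upwards [self_mem_nhdsWithin,
    nhdsWithin_le_nhds (hsinc.eventually_withinFactor one_pos hc),
    nhdsWithin_le_nhds (houter.eventually_withinFactor pi_pos hc),
    nhdsWithin_le_nhds (hdenom.eventually_withinFactor pi_pos hc)] with t (ht : 0 < t) hs hA hW
  refine ⟨?_, hA, hW⟩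
  simpa [sinc_of_ne_zero ht.ne', div_mul_cancel₀ _ ht.ne'] using hs.mul_right ht

lemma SmallAngle.withinFactor_delaunayIntegrand {c α β : ℝ} (hα : SmallAngle c α)
    (hβ : SmallAngle c β) :
    WithinFactor (c ^ 17) (delaunayIntegrand α β) (delaunayModel α β) := by
  obtain ⟨sα, Aα, Wα⟩ := hα
  obtain ⟨sβ, Aβ, Wβ⟩ := hβ
  have hden := ((sβ.pow 2).mul Wα).add ((sα.pow 2).mul Wβ)
  have key := (Aα.mul Aβ).mul (((sα.mul sβ).div hden).pow 3)
  have hα0 := sα.2.1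
  have hβ0 := sβ.2.1
  have hmodel : π * π * (α * β / (β ^ 2 * π + α ^ 2 * π)) ^ 3 = delaunayModel α β := by
    unfold delaunayModel
    field_simp
    ring
  rwa [show c * c * (c * c * (c ^ 2 * c)) ^ 3 = c ^ 17 by ring, hmodel] at key

lemma integral_delaunayModel_right {α v : ℝ} (hα : 0 < α) :
    ∫ β in 0..v, delaunayModel α β = delaunayModelMarginal v α := by
  have hderiv : ∀ β ∈ uIcc 0 v, HasDerivAt
      (fun b => -α ^ 3 * (2 * (α ^ 2 + b ^ 2) - α ^ 2) / (4 * π * (α ^ 2 + b ^ 2) ^ 2))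
      (delaunayModel α β) β := by
    intro β _
    have hS : HasDerivAt (fun b => α ^ 2 + b ^ 2) (2 * β) β := by
      simpa using (hasDerivAt_pow 2 β).const_add (α ^ 2)
    refine ((hS.const_mul 2).sub_const (α ^ 2) |>.const_mul (-α ^ 3)).div
      ((hS.fun_pow 2).const_mul (4 * π)) (by positivity) |>.congr_deriv ?_
    unfold delaunayModel
    field_simp
    ring
  have hcont : ContinuousOn (delaunayModel α) (uIcc 0 v) := by
    unfold delaunayModel
    exact continuousOn_const.mul <| (continuousOn_const.mul continuousOn_id).div
      (by fun_prop) (fun β _ => by positivity) |>.pow 3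
  rw [intervalIntegral.integral_eq_sub_of_hasDerivAt hderiv hcont.intervalIntegrable,
    delaunayModelMarginal]
  field_simp
  ring

lemma integral_delaunayModelMarginal {v : ℝ} (hv : 0 < v) :
    ∫ α in 0..v, delaunayModelMarginal v α = v ^ 2 / (16 * π) := by
  have hderiv : ∀ α ∈ uIcc 0 v, HasDerivAt (fun a => -v ^ 4 * (8 * π * (a ^ 2 + v ^ 2))⁻¹)
      (delaunayModelMarginal v α) α := by
    intro α _
    have hS : HasDerivAt (fun a => a ^ 2 + v ^ 2) (2 * α) α := by
      simpa using (hasDerivAt_pow 2 α).add_const (v ^ 2)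
    refine ((hS.const_mul (8 * π)).inv (by positivity)).const_mul (-v ^ 4) |>.congr_deriv ?_
    unfold delaunayModelMarginal
    field_simp
    ring
  have hcont : ContinuousOn (delaunayModelMarginal v) (uIcc 0 v) :=
    (by fun_prop : Continuous fun α : ℝ => v ^ 4 * α).continuousOn.div (by fun_prop)
      (fun α _ => by positivity)
  rw [intervalIntegral.integral_eq_sub_of_hasDerivAt hderiv hcont.intervalIntegrable]
  field_simp
  ring

lemma measurable_delaunayIntegrand : Measurable (uncurry delaunayIntegrand) := by
  unfold uncurry delaunayIntegrand outerFactor denomWeight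
  fun_prop

lemma abs_div_sq_add_sq_le_one (α β : ℝ) : |α * β / (α ^ 2 + β ^ 2)| ≤ 1 := by
  rw [abs_div, abs_of_nonneg (by positivity : 0 ≤ α ^ 2 + β ^ 2)]
  exact div_le_one_of_le₀ (abs_le.2 ⟨by nlinarith [sq_nonneg (α + β)],
    by nlinarith [sq_nonneg (α - β)]⟩) (by positivity)

lemma integrable_delaunayModel (v : ℝ) : Integrable (uncurry delaunayModel)
    ((volume.restrict (Ioc 0 v)).prod (volume.restrict (Ioc 0 v))) := by
  have hmeas : Measurable (uncurry delaunayModel) := by unfold uncurry delaunayModel; fun_prop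
  refine Integrable.of_bound hmeas.aestronglyMeasurable π⁻¹ (ae_of_all _ ?_)
  rintro ⟨α, β⟩
  have hπ : 0 < π⁻¹ := inv_pos.2 pi_pos
  rw [uncurry_apply_pair, delaunayModel, norm_mul, norm_pow, Real.norm_eq_abs, Real.norm_eq_abs,
    abs_of_pos hπ]
  exact mul_le_of_le_one_right hπ.le
    (pow_le_one₀ (abs_nonneg _) (abs_div_sq_add_sq_le_one α β))

lemma integral_delaunayModel_square {v : ℝ} (hv : 0 < v) :
    ∫ p, uncurry delaunayModel p ∂(volume.restrict (Ioc 0 v)).prod (volume.restrict (Ioc 0 v)) =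
      v ^ 2 / (16 * π) := by
  rw [← intervalIntegral_intervalIntegral_eq_integral_prod hv.le hv.le (integrable_delaunayModel v),
    ← integral_delaunayModelMarginal hv]
  refine intervalIntegral.integral_congr_ae (ae_of_all _ fun α hα => ?_)
  rw [uIoc_of_le hv.le] at hα
  exact integral_delaunayModel_right hα.1

lemma ae_abs_delaunayIntegrand_sub_le {c v : ℝ} (hsmall : ∀ t ∈ Ioc 0 v, SmallAngle c t) :
    ∀ᵐ p ∂(volume.restrict (Ioc 0 v)).prod (volume.restrict (Ioc 0 v)),
      |uncurry delaunayIntegrand p - uncurry delaunayModel p| ≤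
        (c ^ 17 - 1) * uncurry delaunayModel p := by
  rw [Measure.prod_restrict]
  exact ae_restrict_of_forall_mem (measurableSet_Ioc.prod measurableSet_Ioc) fun p hp =>
    ((hsmall _ hp.1).withinFactor_delaunayIntegrand (hsmall _ hp.2)).abs_sub_le

/-- For the integrand
`I(α,β) = ((π-3α)cos α + sin 3α)((π-3β)cos β + sin 3β)
  (sin α sin β / (sin²β (π - α + sin α cos α) + sin²α (π - β + sin β cos β)))³`
arising from the Blaschke–Petkantschin computation for adjacent small-angle
Poisson–Delaunay triangles, one has
`∫₀^v ∫₀^v I(α,β) dβ dα = v²/(16π) + o(v²)` as `v → 0⁺`. -/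
theorem stmt12 (I : ℝ → ℝ → ℝ)
    (hI : ∀ α ∈ Set.Ioc (0 : ℝ) (π / 3), ∀ β ∈ Set.Ioc (0 : ℝ) (π / 3),
      I α β = ((π - 3 * α) * Real.cos α + Real.sin (3 * α)) *
        ((π - 3 * β) * Real.cos β + Real.sin (3 * β)) *
        (Real.sin α * Real.sin β /
            (Real.sin β ^ 2 * (π - α + Real.sin α * Real.cos α) +
              Real.sin α ^ 2 * (π - β + Real.sin β * Real.cos β))) ^ 3) :
    ∀ ε > (0 : ℝ), ∃ v₀ : ℝ, 0 < v₀ ∧ v₀ ≤ π / 3 ∧ ∀ v : ℝ, 0 < v → v ≤ v₀ →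
      |(∫ α in (0 : ℝ)..v, ∫ β in (0 : ℝ)..v, I α β) - v ^ 2 / (16 * π)| ≤ ε * v ^ 2 := by
  intro ε hε
  obtain ⟨c, hc, hcε⟩ := exists_one_lt_pow_le_one_add 17 hε
  obtain ⟨u, hu, hsmall⟩ := mem_nhdsGT_iff_exists_Ioc_subset.1 (eventually_smallAngle hc)
  refine ⟨min u (π / 3), lt_min hu (by positivity), min_le_right _ _, fun v hv hvu => ?_⟩
  have hvu' : v ≤ u := hvu.trans (min_le_left _ _)
  have hvπ : v ≤ π / 3 := hvu.trans (min_le_right _ _)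
  have hI' : ∫ α in 0..v, ∫ β in 0..v, I α β =
      ∫ α in 0..v, ∫ β in 0..v, delaunayIntegrand α β := by
    refine intervalIntegral.integral_congr_ae (ae_of_all _ fun α hα =>
      intervalIntegral.integral_congr_ae (ae_of_all _ fun β hβ => ?_))
    rw [uIoc_of_le hv.le] at hα hβ
    exact hI α ⟨hα.1, hα.2.trans hvπ⟩ β ⟨hβ.1, hβ.2.trans hvπ⟩
  have hae := ae_abs_delaunayIntegrand_sub_le fun t ht => hsmall ⟨ht.1, ht.2.trans hvu'⟩
  rw [hI', intervalIntegral_intervalIntegral_eq_integral_prod hv.le hv.le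
    ((integrable_delaunayModel v).of_abs_sub_le_mul
      measurable_delaunayIntegrand.aestronglyMeasurable hae), ← integral_delaunayModel_square hv]
  refine (abs_integral_sub_le_of_abs_sub_le_mul
    measurable_delaunayIntegrand.aestronglyMeasurable (integrable_delaunayModel v) hae).trans ?_
  rw [integral_delaunayModel_square hv]
  have hmodel : v ^ 2 / (16 * π) ≤ v ^ 2 := div_le_self (sq_nonneg v) (by linarith [pi_gt_three])
  exact mul_le_mul (by linarith) hmodel (by positivity) hε.le
end
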